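/- (Proposition 1, second formula.) Fix j with 1 ≤ j ≤ k, real numbers λ₁, …, λ_j and μ_j, …, μ_k such that each matrix iλ_l I − A_l (1 ≤ l ≤ j) and each matrix iμ_l I − A_l (j ≤ l ≤ k) is invertible, and λ_j ≠ μ_j, together with positive real weights ρ₁, …, ρ_j and φ_j, …, φ_k; set δ = φ_k ⋯ φ_j · ρ_j ⋯ ρ₁. Define the column chain v_j = (iλ_j I − A_j)⁻¹ N_{j−1} (iλ_{j−1} I − A_{j−1})⁻¹ ⋯ N₁ (iλ₁ I − A₁)⁻¹ B₁ ∈ ℂ^{n_j} and the row chain w_jᵀ = C_k (iμ_k I − A_k)⁻¹ N_{k−1} ⋯ N_j (iμ_j I − A_j)⁻¹ ∈ ℂ^{1×n_j}. Then δ · (w_jᵀ A_j v_j) = δ · [ μ_j H_k(iμ_k, …, iμ_{j+1}, iμ_j, iλ_{j−1}, …, iλ₁) − λ_j H_k(iμ_k, …, iμ_{j+1}, iλ_j, iλ_{j−1}, …, iλ₁) ] / ( λ_j − μ_j ). -/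

import Mathlib

open Matrix

/-- `subsystemChain n A N B s j = (s_j I − A_j)⁻¹ N_{j-1} (s_{j-1} I − A_{j-1})⁻¹ ⋯
N₀ (s₀ I − A₀)⁻¹ B₁`, the column chain through the subsystem matrices (0-based indices). -/
noncomputable def subsystemChain (n : ℕ → ℕ)
    (A : (j : ℕ) → Matrix (Fin (n j)) (Fin (n j)) ℂ)
    (N : (j : ℕ) → Matrix (Fin (n (j + 1))) (Fin (n j)) ℂ)
    (B1 : Fin (n 0) → ℂ) (s : ℕ → ℂ) : (j : ℕ) → Fin (n j) → ℂ
  | 0 => ((s 0 • (1 : Matrix (Fin (n 0)) (Fin (n 0)) ℂ) - A 0)⁻¹).mulVec B1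
  | j + 1 =>
      ((s (j + 1) • (1 : Matrix (Fin (n (j + 1))) (Fin (n (j + 1))) ℂ) - A (j + 1))⁻¹).mulVec
        ((N j).mulVec (subsystemChain n A N B1 s j))

/-- `rowMidChain n A N s j d = (s_{j+d} I − A_{j+d})⁻¹ N_{j+d-1} ⋯ N_j (s_j I − A_j)⁻¹`,
the matrix chain from level `j` up to level `j + d`. -/
noncomputable def rowMidChain (n : ℕ → ℕ)
    (A : (j : ℕ) → Matrix (Fin (n j)) (Fin (n j)) ℂ)
    (N : (j : ℕ) → Matrix (Fin (n (j + 1))) (Fin (n j)) ℂ) (s : ℕ → ℂ) (j : ℕ) :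
    (d : ℕ) → Matrix (Fin (n (j + d))) (Fin (n j)) ℂ
  | 0 => ((s j • (1 : Matrix (Fin (n j)) (Fin (n j)) ℂ) - A j)⁻¹ :
      Matrix (Fin (n j)) (Fin (n j)) ℂ)
  | d + 1 =>
      (((s (j + d + 1) •
          (1 : Matrix (Fin (n (j + d + 1))) (Fin (n (j + d + 1))) ℂ) - A (j + d + 1))⁻¹ *
        N (j + d) * rowMidChain n A N s j d : Matrix (Fin (n (j + d + 1))) (Fin (n j)) ℂ))

section Aux
variable (n : ℕ → ℕ)
    (A : (j : ℕ) → Matrix (Fin (n j)) (Fin (n j)) ℂ)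
    (N : (j : ℕ) → Matrix (Fin (n (j + 1))) (Fin (n j)) ℂ)
    (B1 : Fin (n 0) → ℂ)

/-- The vector arriving below level `j`. -/
noncomputable def preVec (s : ℕ → ℂ) : (j : ℕ) → Fin (n j) → ℂ
  | 0 => B1
  | j + 1 => (N j).mulVec (subsystemChain n A N B1 s j)

/-- Upper part of the row chain, from strictly above level `j0` up to `j0 + e`. -/
noncomputable def rowTop (s : ℕ → ℂ) (j0 : ℕ) :
    (e : ℕ) → Matrix (Fin (n (j0 + e))) (Fin (n j0)) ℂ
  | 0 => (1 : Matrix (Fin (n j0)) (Fin (n j0)) ℂ)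
  | e + 1 =>
      (s (j0 + e + 1) •
          (1 : Matrix (Fin (n (j0 + e + 1))) (Fin (n (j0 + e + 1))) ℂ) - A (j0 + e + 1))⁻¹ *
        N (j0 + e) * rowTop s j0 e

lemma subsystemChain_congr (s s' : ℕ → ℂ) :
    ∀ j, (∀ l ≤ j, s l = s' l) →
      subsystemChain n A N B1 s j = subsystemChain n A N B1 s' j
  | 0, h => by simp [subsystemChain, h 0 le_rfl]
  | j + 1, h => by
      rw [subsystemChain, subsystemChain, h (j + 1) le_rfl,
        subsystemChain_congr s s' j fun l hl => h l (hl.trans (Nat.le_succ j))]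

lemma preVec_congr (s s' : ℕ → ℂ) (j : ℕ) (h : ∀ l < j, s l = s' l) :
    preVec n A N B1 s j = preVec n A N B1 s' j := by
  cases j with
  | zero => rfl
  | succ j =>
      rw [preVec, preVec,
        subsystemChain_congr n A N B1 s s' j fun l hl => h l (Nat.lt_succ_of_le hl)]

lemma rowTop_congr (s s' : ℕ → ℂ) (j0 : ℕ) :
    ∀ e, (∀ l, j0 < l → l ≤ j0 + e → s l = s' l) →
      rowTop n A N s j0 e = rowTop n A N s' j0 e
  | 0, _ => rfl
  | e + 1, h => by
      rw [rowTop, rowTop, h (j0 + e + 1) (by omega) (by omega),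
        rowTop_congr s s' j0 e fun l h1 h2 => h l h1 (by omega)]

lemma subsystemChain_eq_mulVec (s : ℕ → ℂ) (j0 : ℕ) :
    ∀ e, subsystemChain n A N B1 s (j0 + e) =
      (rowMidChain n A N s j0 e).mulVec (preVec n A N B1 s j0)
  | 0 => by
      cases j0 with
      | zero => rfl
      | succ j => rfl
  | e + 1 => by
      show subsystemChain n A N B1 s ((j0 + e) + 1) = _
      rw [subsystemChain, subsystemChain_eq_mulVec s j0 e, rowMidChain,
        mulVec_mulVec, mulVec_mulVec, Matrix.mul_assoc]

lemma rowMidChain_eq_rowTop (s : ℕ → ℂ) (j0 : ℕ) :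
    ∀ e, rowMidChain n A N s j0 e =
      rowTop n A N s j0 e * (s j0 • (1 : Matrix (Fin (n j0)) (Fin (n j0)) ℂ) - A j0)⁻¹
  | 0 => by rw [rowMidChain, rowTop, Matrix.one_mul]
  | e + 1 => by
      rw [rowMidChain, rowTop, rowMidChain_eq_rowTop s j0 e, Matrix.mul_assoc,
        Matrix.mul_assoc, Matrix.mul_assoc]

end Aux

/-- Proposition 1, second formula.  Here `j = j0 + 1` and `k = j0 + e + 1` (so `1 ≤ j ≤ k`),
`v` is the column chain `v_j` driven by the nodes `iλ_l`, `w` is the row chain `w_jᵀ` driven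
by the nodes `iμ_l`, and `δ = φ_k ⋯ φ_j · ρ_j ⋯ ρ₁`.  Then
`δ (w_jᵀ A_j v_j) = δ [μ_j H_k(iμ_k, …, iμ_j, iλ_{j−1}, …, iλ₁) −
λ_j H_k(iμ_k, …, iμ_{j+1}, iλ_j, …, iλ₁)] / (λ_j − μ_j)`. -/
theorem kpower_prop1_second_formula (n : ℕ → ℕ) (j0 e : ℕ)
    (A : (j : ℕ) → Matrix (Fin (n j)) (Fin (n j)) ℝ)
    (N : (j : ℕ) → Matrix (Fin (n (j + 1))) (Fin (n j)) ℝ)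
    (B1 : Fin (n 0) → ℝ) (Ck : Fin (n (j0 + e)) → ℝ)
    (lam mu : ℕ → ℝ)
    (hlam : ∀ l ≤ j0, IsUnit ((Complex.I * (lam l : ℂ)) •
      (1 : Matrix (Fin (n l)) (Fin (n l)) ℂ) - (A l).map (Complex.ofReal)))
    (hmu : ∀ l, j0 ≤ l → l ≤ j0 + e → IsUnit ((Complex.I * (mu l : ℂ)) •
      (1 : Matrix (Fin (n l)) (Fin (n l)) ℂ) - (A l).map (Complex.ofReal)))
    (hne : lam j0 ≠ mu j0)
    (rho phi : ℕ → ℝ)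
    (hrho : ∀ l ≤ j0, 0 < rho l)
    (hphi : ∀ l, j0 ≤ l → l ≤ j0 + e → 0 < phi l) :
    (((∏ l ∈ Finset.Icc j0 (j0 + e), phi l) * ∏ l ∈ Finset.range (j0 + 1), rho l : ℝ) : ℂ) *
        (Matrix.vecMul (fun i => ((Ck i : ℝ) : ℂ))
            (rowMidChain n (fun j => (A j).map (Complex.ofReal))
              (fun j => (N j).map (Complex.ofReal))
              (fun l => Complex.I * (mu l : ℂ)) j0 e) ⬝ᵥ
          ((A j0).map (Complex.ofReal)).mulVec
            (subsystemChain n (fun j => (A j).map (Complex.ofReal))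
              (fun j => (N j).map (Complex.ofReal)) (fun i => ((B1 i : ℝ) : ℂ))
              (fun l => Complex.I * (lam l : ℂ)) j0)) =
      (((∏ l ∈ Finset.Icc j0 (j0 + e), phi l) * ∏ l ∈ Finset.range (j0 + 1), rho l : ℝ) : ℂ) *
        (((mu j0 : ℂ)) * ((fun i => ((Ck i : ℝ) : ℂ)) ⬝ᵥ
            subsystemChain n (fun j => (A j).map (Complex.ofReal))
              (fun j => (N j).map (Complex.ofReal)) (fun i => ((B1 i : ℝ) : ℂ))
              (fun l => if l < j0 then Complex.I * (lam l : ℂ) else Complex.I * (mu l : ℂ))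
              (j0 + e)) -
          ((lam j0 : ℂ)) * ((fun i => ((Ck i : ℝ) : ℂ)) ⬝ᵥ
            subsystemChain n (fun j => (A j).map (Complex.ofReal))
              (fun j => (N j).map (Complex.ofReal)) (fun i => ((B1 i : ℝ) : ℂ))
              (fun l => if l ≤ j0 then Complex.I * (lam l : ℂ) else Complex.I * (mu l : ℂ))
              (j0 + e))) /
        ((lam j0 : ℂ) - (mu j0 : ℂ)) := by
  
  -- notation
  set Ac : (j : ℕ) → Matrix (Fin (n j)) (Fin (n j)) ℂ :=
    fun j => (A j).map (Complex.ofReal) with hAc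
  set Nc : (j : ℕ) → Matrix (Fin (n (j + 1))) (Fin (n j)) ℂ :=
    fun j => (N j).map (Complex.ofReal) with hNc
  set Bc : Fin (n 0) → ℂ := fun i => ((B1 i : ℝ) : ℂ) with hBc
  set Cc : Fin (n (j0 + e)) → ℂ := fun i => ((Ck i : ℝ) : ℂ) with hCc
  set sl : ℕ → ℂ := fun l => Complex.I * (lam l : ℂ) with hsl
  set sm : ℕ → ℂ := fun l => Complex.I * (mu l : ℂ) with hsm
  set s1 : ℕ → ℂ :=
    fun l => if l < j0 then Complex.I * (lam l : ℂ) else Complex.I * (mu l : ℂ) with hs1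
  set s2 : ℕ → ℂ :=
    fun l => if l ≤ j0 then Complex.I * (lam l : ℂ) else Complex.I * (mu l : ℂ) with hs2
  set Ml : Matrix (Fin (n j0)) (Fin (n j0)) ℂ :=
    sl j0 • (1 : Matrix (Fin (n j0)) (Fin (n j0)) ℂ) - Ac j0 with hMl
  set Mm : Matrix (Fin (n j0)) (Fin (n j0)) ℂ :=
    sm j0 • (1 : Matrix (Fin (n j0)) (Fin (n j0)) ℂ) - Ac j0 with hMm
  have hdetl : IsUnit Ml.det := (Matrix.isUnit_iff_isUnit_det _).1 (hlam j0 le_rfl)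
  have hdetm : IsUnit Mm.det := (Matrix.isUnit_iff_isUnit_det _).1 (hmu j0 le_rfl (Nat.le_add_right j0 e))
  set q : Fin (n j0) → ℂ := preVec n Ac Nc Bc sl j0 with hq
  set T : Matrix (Fin (n (j0 + e))) (Fin (n j0)) ℂ := rowTop n Ac Nc sm j0 e with hT
  set c : Fin (n j0) → ℂ := Matrix.vecMul Cc T with hc
  -- express the LHS inner product
  have hv : subsystemChain n Ac Nc Bc sl j0 = Ml⁻¹.mulVec q :=
    subsystemChain_eq_mulVec n Ac Nc Bc sl j0 0
  have hLHS : Matrix.vecMul Cc (rowMidChain n Ac Nc sm j0 e) ⬝ᵥ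
      (Ac j0).mulVec (subsystemChain n Ac Nc Bc sl j0) =
      c ⬝ᵥ (Mm⁻¹ * Ac j0 * Ml⁻¹).mulVec q := by
    rw [hv, rowMidChain_eq_rowTop, ← hMm, ← hT, ← Matrix.vecMul_vecMul, ← hc,
      Matrix.mulVec_mulVec, ← Matrix.dotProduct_mulVec, Matrix.mulVec_mulVec,
      ← Matrix.mul_assoc]
  -- express the two transfer-function values
  have hq1 : preVec n Ac Nc Bc s1 j0 = q := by
    refine preVec_congr n Ac Nc Bc s1 sl j0 fun l hl => ?_
    simp [hs1, hsl, hl]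
  have hq2 : preVec n Ac Nc Bc s2 j0 = q := by
    refine preVec_congr n Ac Nc Bc s2 sl j0 fun l hl => ?_
    simp [hs2, hsl, hl.le]
  have hT1 : rowTop n Ac Nc s1 j0 e = T := by
    refine rowTop_congr n Ac Nc s1 sm j0 e fun l h1 h2 => ?_
    simp [hs1, hsm, Nat.not_lt.2 h1.le]
  have hT2 : rowTop n Ac Nc s2 j0 e = T := by
    refine rowTop_congr n Ac Nc s2 sm j0 e fun l h1 h2 => ?_
    simp [hs2, hsm, Nat.not_le.2 h1]
  have hs1j0 : s1 j0 = sm j0 := by simp [hs1, hsm]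
  have hs2j0 : s2 j0 = sl j0 := by simp [hs2, hsl]
  have hHm : Cc ⬝ᵥ subsystemChain n Ac Nc Bc s1 (j0 + e) = c ⬝ᵥ Mm⁻¹.mulVec q := by
    rw [subsystemChain_eq_mulVec, rowMidChain_eq_rowTop, hT1, hq1, hs1j0, ← hMm,
      Matrix.dotProduct_mulVec, ← Matrix.vecMul_vecMul, ← hc, ← Matrix.dotProduct_mulVec]
  have hHl : Cc ⬝ᵥ subsystemChain n Ac Nc Bc s2 (j0 + e) = c ⬝ᵥ Ml⁻¹.mulVec q := by
    rw [subsystemChain_eq_mulVec, rowMidChain_eq_rowTop, hT2, hq2, hs2j0, ← hMl,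
      Matrix.dotProduct_mulVec, ← Matrix.vecMul_vecMul, ← hc, ← Matrix.dotProduct_mulVec]
  -- resolvent identity
  have e1 : Mm⁻¹ * Ac j0 * Ml⁻¹ = sl j0 • (Mm⁻¹ * Ml⁻¹) - Mm⁻¹ := by
    have hA : Ac j0 = sl j0 • (1 : Matrix (Fin (n j0)) (Fin (n j0)) ℂ) - Ml := by
      rw [hMl]; abel
    rw [hA, Matrix.mul_sub, Matrix.sub_mul, Matrix.mul_smul, Matrix.smul_mul,
      Matrix.mul_one, Matrix.mul_assoc, Matrix.mul_nonsing_inv _ hdetl, Matrix.mul_one]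
  have e2 : Mm⁻¹ * Ac j0 * Ml⁻¹ = sm j0 • (Mm⁻¹ * Ml⁻¹) - Ml⁻¹ := by
    have hA : Ac j0 = sm j0 • (1 : Matrix (Fin (n j0)) (Fin (n j0)) ℂ) - Mm := by
      rw [hMm]; abel
    rw [hA, Matrix.mul_sub, Matrix.sub_mul, Matrix.mul_smul, Matrix.smul_mul,
      Matrix.mul_one, Matrix.nonsing_inv_mul _ hdetm, Matrix.one_mul]
  have key : (sl j0 - sm j0) • (Mm⁻¹ * Ac j0 * Ml⁻¹) = sm j0 • Mm⁻¹ - sl j0 • Ml⁻¹ := by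
    rw [sub_smul]
    nth_rewrite 1 [e2]
    nth_rewrite 1 [e1]
    rw [smul_sub, smul_sub, smul_smul, smul_smul, mul_comm (sl j0) (sm j0)]
    abel
  -- scalar version
  have keyS : (sl j0 - sm j0) * (c ⬝ᵥ (Mm⁻¹ * Ac j0 * Ml⁻¹).mulVec q) =
      sm j0 * (c ⬝ᵥ Mm⁻¹.mulVec q) - sl j0 * (c ⬝ᵥ Ml⁻¹.mulVec q) := by
    have := congrArg (fun M : Matrix (Fin (n j0)) (Fin (n j0)) ℂ => c ⬝ᵥ M.mulVec q) key
    simpa [Matrix.smul_mulVec, Matrix.sub_mulVec, dotProduct_smul, dotProduct_sub,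
      smul_eq_mul, mul_sub] using this
  -- cancel the factor I
  have hI : sl j0 - sm j0 = Complex.I * ((lam j0 : ℂ) - (mu j0 : ℂ)) := by
    rw [hsl, hsm]; ring
  have hsub : (lam j0 : ℂ) - (mu j0 : ℂ) ≠ 0 := by
    rw [sub_ne_zero]
    exact_mod_cast hne
  have keyS' : ((lam j0 : ℂ) - (mu j0 : ℂ)) * (c ⬝ᵥ (Mm⁻¹ * Ac j0 * Ml⁻¹).mulVec q) =
      (mu j0 : ℂ) * (c ⬝ᵥ Mm⁻¹.mulVec q) - (lam j0 : ℂ) * (c ⬝ᵥ Ml⁻¹.mulVec q) := by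
    apply mul_left_cancel₀ Complex.I_ne_zero
    rw [hI] at keyS
    rw [← mul_assoc, keyS, hsl, hsm]
    ring
  rw [hLHS, hHm, hHl, ← keyS']
  field_simp
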